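/- For the alternating word z_{n-1} of length n-1, the f-polynomial satisfies F_{z_{n-1}}(t) = 1 + Σ (t+1)^k, where the sum is over all compositions (c_1,...,c_k) of n with c_1,...,c_{k-1} ∈ {1,2} and c_k ≥ 1 arbitrary. Here F_{z_{n-1}}(t) = 1 + Σ_T ((t+1)/t)^{κ(z_{n-1}^T)} t^{|T|+1} over subsets T of {1,...,n-1}. -/

import Mathlib

/-!
Write `ω(w) = (t+1)^κ(w) t^(|w|+1-κ(w))`, so that `F_v = 1 + ∑_T ω(v^T)`. Appending a letter `c`
to a subword `w` multiplies `ω(w)` by `t` if `w` ends in `c` and by `t+1` otherwise. Hence, with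
`S(v) = ∑_T ω(v^T)` and `E_c(v)` the part of this sum over the subwords ending in `c`,
`S(vc) = (t+2) S(v) - E_c(v)` and `E_c(vc) = (t+1) S(v)`. Along the alternating word this yields
`S(z_{m+2}) = (t+1) (1 + S(z_{m+1}) + S(z_m))`, which is also the recurrence satisfied by the
right-hand side: a composition with at least two parts starts with a part `1` or `2`, followed by
a restricted composition of `n - 1` or `n - 2`.
-/

/-- `κ(w) = 2 + #{i : w_i ≠ w_{i+1}}` for nonempty `w`, and `κ(empty) = 1`. -/
def kappa (w : List Bool) : ℕ :=
  if w = [] then 1 else 2 + (w.zip w.tail).countP (fun p => p.1 != p.2)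

/-- The subword of `v` at the (1-indexed) positions in `T`. -/
def subword (v : List Bool) (T : Finset ℕ) : List Bool :=
  ((v.zipIdx.map Prod.swap).filter (fun p => decide (p.1 + 1 ∈ T))).map Prod.snd

/-- The `f`-polynomial `F_v(t) = 1 + ∑_{T ⊆ [|v|]} ((t+1)/t)^{κ(v^T)} t^{|T|+1}`,
written with the power of `t` as `t^{|T|+1-κ(v^T)}` (valid since `κ(v^T) ≤ |T|+1`). -/
noncomputable def fPoly (v : List Bool) : Polynomial ℤ :=
  1 + ∑ T ∈ (Finset.Icc 1 v.length).powerset,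
      (Polynomial.X + 1) ^ kappa (subword v T) *
        Polynomial.X ^ (T.card + 1 - kappa (subword v T))

/-- The alternating word of length `m` starting with `x` (where `x = false`, `y = true`). -/
def zWord (m : ℕ) : List Bool := (List.range m).map (fun i => decide (i % 2 = 1))

open Polynomial Finset

lemma kappa_cons_cons (a b : Bool) (w : List Bool) :
    kappa (a :: b :: w) = kappa (b :: w) + if a = b then 0 else 1 := by
  simp only [kappa, reduceCtorEq, if_false, List.tail_cons, List.zip_cons_cons, List.countP_cons]
  cases a <;> cases b <;> simp <;> omega

lemma kappa_append_singleton (w : List Bool) (b : Bool) :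
    kappa (w ++ [b]) = kappa w + if w.getLast? = some b then 0 else 1 := by
  induction w with
  | nil => rfl
  | cons a w ih =>
    cases w with
    | nil => cases a <;> cases b <;> rfl
    | cons c w =>
      rw [List.cons_append, List.cons_append, kappa_cons_cons, ← List.cons_append, ih,
        kappa_cons_cons, List.getLast?_cons_cons]
      omega

lemma kappa_le_length_add_one (w : List Bool) : kappa w ≤ w.length + 1 := by
  induction w using List.reverseRecOn with
  | nil => rfl
  | append_singleton w b ih =>
    rw [kappa_append_singleton, List.length_append]
    split <;> simp <;> omega

noncomputable def subwordWeight (w : List Bool) : ℤ[X] :=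
  (X + 1) ^ kappa w * X ^ (w.length + 1 - kappa w)

lemma subwordWeight_nil : subwordWeight [] = X + 1 := by
  simp [subwordWeight, kappa]

lemma subwordWeight_append_singleton (w : List Bool) (b : Bool) :
    subwordWeight (w ++ [b]) = (if w.getLast? = some b then X else X + 1) * subwordWeight w := by
  have hle := kappa_le_length_add_one w
  simp only [subwordWeight, kappa_append_singleton, List.length_append, List.length_singleton]
  split
  · rw [add_zero, show w.length + 1 + 1 - kappa w = w.length + 1 - kappa w + 1 by omega]
    ring
  · rw [show w.length + 1 + 1 - (kappa w + 1) = w.length + 1 - kappa w by omega]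
    ring

lemma subword_append_singleton (v : List Bool) (c : Bool) (T : Finset ℕ) :
    subword (v ++ [c]) T = subword v T ++ if v.length + 1 ∈ T then [c] else [] := by
  simp only [subword, List.zipIdx_append, List.map_append, List.filter_append, zero_add]
  split <;> simp [*]

lemma subword_insert_of_length_lt (v : List Bool) (T : Finset ℕ) {i : ℕ} (hi : v.length < i) :
    subword v (insert i T) = subword v T := by
  unfold subword
  congr 1
  refine List.filter_congr fun p hp => ?_
  obtain ⟨x, j⟩ := p
  simp only [List.mem_map, Prod.exists, Prod.swap_prod_mk, Prod.mk.injEq] at hp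
  obtain ⟨y, k, hk, rfl, rfl⟩ := hp
  have := (List.mem_zipIdx hk).2.1
  simp only [Finset.mem_insert, decide_eq_decide, or_iff_right_iff_imp]
  omega

lemma length_subword (v : List Bool) (T : Finset ℕ) :
    (subword v T).length = #(T ∩ Icc 1 v.length) := by
  induction v using List.reverseRecOn with
  | nil => simp [subword]
  | append_singleton v c ih =>
    have hv : v.length + 1 ∉ T ∩ Icc 1 v.length := by simp
    rw [subword_append_singleton, List.length_append, ih, List.length_append,
      List.length_singleton, ← Finset.insert_Icc_right_eq_Icc_add_one (by omega)]
    split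
    · rw [inter_insert_of_mem ‹_›, card_insert_of_notMem hv, List.length_singleton]
    · rw [inter_insert_of_notMem ‹_›, List.length_nil, add_zero]

lemma length_subword_of_subset {v : List Bool} {T : Finset ℕ} (hT : T ⊆ Icc 1 v.length) :
    (subword v T).length = #T := by
  rw [length_subword, inter_eq_left.mpr hT]

section SubwordSum

variable {M : Type*} [AddCommMonoid M]

def subwordSum (f : List Bool → M) (v : List Bool) : M :=
  ∑ T ∈ (Icc 1 v.length).powerset, f (subword v T)

lemma subwordSum_nil (f : List Bool → M) : subwordSum f [] = f [] := by
  simp [subwordSum, subword]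

lemma subwordSum_append_singleton (f : List Bool → M) (v : List Bool) (c : Bool) :
    subwordSum f (v ++ [c]) = subwordSum f v + subwordSum (fun w => f (w ++ [c])) v := by
  have hv : v.length + 1 ∉ Icc 1 v.length := by simp
  rw [subwordSum, List.length_append, List.length_singleton,
    ← Finset.insert_Icc_right_eq_Icc_add_one (by omega), sum_powerset_insert hv]
  congr 1 <;> refine sum_congr rfl fun T hT => ?_
  · have : v.length + 1 ∉ T := fun h => hv (mem_powerset.mp hT h)
    simp [subword_append_singleton, this]
  · simp [subword_append_singleton, subword_insert_of_length_lt v T (Nat.lt_succ_self _)]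

end SubwordSum

lemma fPoly_eq_one_add_subwordSum (v : List Bool) : fPoly v = 1 + subwordSum subwordWeight v := by
  rw [fPoly, subwordSum]
  congr 1
  refine sum_congr rfl fun T hT => ?_
  rw [subwordWeight, length_subword_of_subset (mem_powerset.mp hT)]

noncomputable def subwordSumEndingIn (c : Bool) : List Bool → ℤ[X] :=
  subwordSum fun w => if w.getLast? = some c then subwordWeight w else 0

lemma subwordSumEndingIn_nil (c : Bool) : subwordSumEndingIn c [] = 0 := by
  rw [subwordSumEndingIn, subwordSum_nil, if_neg (by simp)]

lemma subwordSum_subwordWeight_append_singleton (v : List Bool) (c : Bool) :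
    subwordSum subwordWeight (v ++ [c]) =
      (X + 2) * subwordSum subwordWeight v - subwordSumEndingIn c v := by
  rw [subwordSum_append_singleton, subwordSumEndingIn]
  simp only [subwordSum, subwordWeight_append_singleton, mul_sum, ← sum_sub_distrib,
    ← sum_add_distrib]
  refine sum_congr rfl fun T _ => ?_
  split <;> ring

lemma subwordSumEndingIn_append_self (v : List Bool) (c : Bool) :
    subwordSumEndingIn c (v ++ [c]) = (X + 1) * subwordSum subwordWeight v := by
  rw [subwordSumEndingIn, subwordSum_append_singleton]
  simp only [subwordSum, List.getLast?_concat, if_true, subwordWeight_append_singleton, mul_sum,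
    ← sum_add_distrib]
  refine sum_congr rfl fun T _ => ?_
  split <;> ring

lemma subwordSumEndingIn_append_of_ne (v : List Bool) {c d : Bool} (h : c ≠ d) :
    subwordSumEndingIn c (v ++ [d]) = subwordSumEndingIn c v := by
  rw [subwordSumEndingIn, subwordSum_append_singleton]
  simp [subwordSum, h.symm]

lemma zWord_zero : zWord 0 = [] := rfl

lemma zWord_succ (m : ℕ) : zWord (m + 1) = zWord m ++ [decide (m % 2 = 1)] := by
  simp [zWord, List.range_succ]

lemma subwordSum_subwordWeight_zWord_succ (m : ℕ) :
    subwordSum subwordWeight (zWord (m + 1)) =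
      (X + 2) * subwordSum subwordWeight (zWord m) -
        subwordSumEndingIn (decide (m % 2 = 1)) (zWord m) := by
  rw [zWord_succ, subwordSum_subwordWeight_append_singleton]

lemma subwordSumEndingIn_zWord_add_two (m : ℕ) :
    subwordSumEndingIn (decide ((m + 2) % 2 = 1)) (zWord (m + 2)) =
      (X + 1) * subwordSum subwordWeight (zWord m) := by
  have hne : decide (m % 2 = 1) ≠ decide ((m + 1) % 2 = 1) := by
    simp only [ne_eq, decide_eq_decide]
    omega
  rw [show (m + 2) % 2 = m % 2 by omega, zWord_succ, subwordSumEndingIn_append_of_ne _ hne,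
    zWord_succ, subwordSumEndingIn_append_self]

lemma subwordSum_subwordWeight_zWord_zero : subwordSum subwordWeight (zWord 0) = X + 1 := by
  rw [zWord_zero, subwordSum_nil, subwordWeight_nil]

lemma subwordSum_subwordWeight_zWord_one :
    subwordSum subwordWeight (zWord 1) = (X + 2) * (X + 1) := by
  rw [subwordSum_subwordWeight_zWord_succ, subwordSum_subwordWeight_zWord_zero, zWord_zero,
    subwordSumEndingIn_nil, sub_zero]

lemma subwordSum_subwordWeight_zWord_add_two (m : ℕ) :
    subwordSum subwordWeight (zWord (m + 2)) =
      (X + 1) * (1 + subwordSum subwordWeight (zWord (m + 1)) +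
        subwordSum subwordWeight (zWord m)) := by
  induction m with
  | zero =>
    rw [subwordSum_subwordWeight_zWord_succ, subwordSum_subwordWeight_zWord_one,
      subwordSum_subwordWeight_zWord_zero, zWord_succ, subwordSumEndingIn_append_of_ne _ (by decide),
      zWord_zero, subwordSumEndingIn_nil, sub_zero]
    ring
  | succ m ih =>
    rw [subwordSum_subwordWeight_zWord_succ, subwordSumEndingIn_zWord_add_two, ih]
    ring

def restrictedCompositions (n k : ℕ) : Set (List ℕ) :=
  {c | c.length = k ∧ c.sum = n ∧ (∀ a ∈ c, 0 < a) ∧ ∀ a ∈ c.dropLast, a = 1 ∨ a = 2}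

lemma restrictedCompositions_finite (n k : ℕ) : (restrictedCompositions n k).Finite :=
  (Set.finite_range (Composition.blocks (n := n))).subset fun c ⟨_, hsum, hpos, _⟩ =>
    ⟨⟨c, hpos _, hsum⟩, rfl⟩

lemma restrictedCompositions_eq_empty_of_lt {n k : ℕ} (h : n < k) :
    restrictedCompositions n k = ∅ := by
  refine Set.eq_empty_of_forall_notMem fun c ⟨hlen, hsum, hpos, _⟩ => ?_
  have := c.length_le_sum_of_one_le hpos
  omega

lemma restrictedCompositions_one (n : ℕ) : restrictedCompositions (n + 1) 1 = {[n + 1]} := by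
  ext c
  constructor
  · rintro ⟨hlen, hsum, -, -⟩
    obtain ⟨a, rfl⟩ := List.length_eq_one_iff.mp hlen
    simpa using hsum
  · rintro rfl
    simp [restrictedCompositions]

lemma cons_mem_restrictedCompositions_iff {n k a : ℕ} {t : List ℕ} (hk : k ≠ 0) :
    a :: t ∈ restrictedCompositions n (k + 1) ↔
      (a = 1 ∨ a = 2) ∧ a ≤ n ∧ t ∈ restrictedCompositions (n - a) k := by
  cases t with
  | nil =>
    simp only [restrictedCompositions, Set.mem_ofPred_eq, List.length_cons, List.length_nil]
    omega
  | cons b t =>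
    simp only [restrictedCompositions, Set.mem_ofPred_eq, List.length_cons, List.sum_cons,
      List.forall_mem_cons, List.dropLast_cons_cons]
    constructor
    · rintro ⟨hlen, hsum, ⟨-, hpos⟩, ha, hdrop⟩
      exact ⟨ha, by omega, by omega, by omega, hpos, hdrop⟩
    · rintro ⟨ha, han, hlen, hsum, hpos, hdrop⟩
      exact ⟨by omega, by omega, ⟨by omega, hpos⟩, ha, hdrop⟩

lemma restrictedCompositions_add_two {n k : ℕ} (hk : k ≠ 0) :
    restrictedCompositions (n + 2) (k + 1) =
      List.cons 1 '' restrictedCompositions (n + 1) k ∪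
        List.cons 2 '' restrictedCompositions n k := by
  ext c
  rcases c with _ | ⟨a, t⟩
  · simp [restrictedCompositions]
  rw [cons_mem_restrictedCompositions_iff hk]
  rcases eq_or_ne a 1 with rfl | h1
  · simp
  rcases eq_or_ne a 2 with rfl | h2
  · simp
  simp [h1, h2, h1.symm, h2.symm]

lemma ncard_restrictedCompositions_one (n : ℕ) : (restrictedCompositions (n + 1) 1).ncard = 1 := by
  rw [restrictedCompositions_one, Set.ncard_singleton]

lemma ncard_restrictedCompositions_add_two {n k : ℕ} (hk : k ≠ 0) :
    (restrictedCompositions (n + 2) (k + 1)).ncard =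
      (restrictedCompositions (n + 1) k).ncard + (restrictedCompositions n k).ncard := by
  have hdisj : Disjoint (List.cons 1 '' restrictedCompositions (n + 1) k)
      (List.cons 2 '' restrictedCompositions n k) := by
    rw [Set.disjoint_left]
    rintro _ ⟨_, -, rfl⟩ ⟨_, -, h⟩
    simp at h
  rw [restrictedCompositions_add_two hk, Set.ncard_union_eq hdisj
      ((restrictedCompositions_finite _ _).image _) ((restrictedCompositions_finite _ _).image _),
    Set.ncard_image_of_injective _ List.cons_injective,
    Set.ncard_image_of_injective _ List.cons_injective]

lemma sum_Icc_one_eq_sum_range {M : Type*} [AddCommMonoid M] (f : ℕ → M) (n : ℕ) :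
    ∑ k ∈ Icc 1 n, f k = ∑ i ∈ range n, f (i + 1) := by
  induction n with
  | zero => rfl
  | succ n ih => rw [sum_Icc_succ_top (by omega), ih, sum_range_succ]

noncomputable def restrictedCompositionPoly (n : ℕ) : ℤ[X] :=
  ∑ k ∈ Icc 1 n, ((restrictedCompositions n k).ncard : ℤ[X]) * (X + 1) ^ k

lemma restrictedCompositionPoly_zero : restrictedCompositionPoly 0 = 0 := rfl

lemma restrictedCompositionPoly_one : restrictedCompositionPoly 1 = X + 1 := by
  simp [restrictedCompositionPoly, ncard_restrictedCompositions_one 0]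

lemma restrictedCompositionPoly_add_two (n : ℕ) :
    restrictedCompositionPoly (n + 2) =
      (X + 1) * (1 + restrictedCompositionPoly (n + 1) + restrictedCompositionPoly n) := by
  have hsplit (i : ℕ) :
      ((restrictedCompositions (n + 2) (i + 1 + 1)).ncard : ℤ[X]) * (X + 1) ^ (i + 1 + 1) =
        (X + 1) * (((restrictedCompositions (n + 1) (i + 1)).ncard : ℤ[X]) * (X + 1) ^ (i + 1)) +
          (X + 1) * (((restrictedCompositions n (i + 1)).ncard : ℤ[X]) * (X + 1) ^ (i + 1)) := by
    rw [ncard_restrictedCompositions_add_two i.succ_ne_zero]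
    push_cast
    ring
  simp only [restrictedCompositionPoly, sum_Icc_one_eq_sum_range]
  rw [sum_range_succ', sum_congr rfl fun i _ => hsplit i, sum_add_distrib, ← mul_sum, ← mul_sum,
    sum_range_succ _ n, sum_range_succ _ n, restrictedCompositions_eq_empty_of_lt n.lt_succ_self,
    ncard_restrictedCompositions_one, Set.ncard_empty]
  push_cast
  ring

lemma subwordSum_subwordWeight_zWord (m : ℕ) :
    subwordSum subwordWeight (zWord m) = restrictedCompositionPoly (m + 1) := by
  induction m using Nat.twoStepInduction with
  | zero => rw [subwordSum_subwordWeight_zWord_zero, restrictedCompositionPoly_one]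
  | one =>
    rw [subwordSum_subwordWeight_zWord_one, restrictedCompositionPoly_add_two,
      restrictedCompositionPoly_one, restrictedCompositionPoly_zero]
    ring
  | more m ih₀ ih₁ =>
    rw [subwordSum_subwordWeight_zWord_add_two, ih₀, ih₁, ← restrictedCompositionPoly_add_two]

/-- `F_{z_{n-1}}(t) = 1 + ∑ (t+1)^k`, summed over compositions
`(c_1,…,c_k)` of `n` with `c_1,…,c_{k-1} ∈ {1,2}`. -/
theorem stmt14 (n : ℕ) (hn : 1 ≤ n) :
    fPoly (zWord (n - 1)) = 1 + ∑ k ∈ Finset.Icc 1 n,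
      (Nat.card {c : List ℕ // c.length = k ∧ c.sum = n ∧ (∀ a ∈ c, 0 < a) ∧
          ∀ a ∈ c.dropLast, a = 1 ∨ a = 2} : Polynomial ℤ) *
        (Polynomial.X + 1) ^ k := by
  obtain ⟨m, rfl⟩ := Nat.exists_eq_add_of_le' hn
  rw [Nat.add_sub_cancel, fPoly_eq_one_add_subwordSum, subwordSum_subwordWeight_zWord]
  rfl
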